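/- arXiv:1302.5301 — 5 statements merged into one kernel-verified Lean document; each statement's English description precedes it below -/
import Mathlib

section
/- For all real numbers p ≥ 0 and q ≥ 0, the improper integral ∫₀^∞ (exp(−p·y) − exp(−q·y))·y^(−3/2) dy converges and equals 2·√π·(√q − √p). -/
/-!
Write the integrand as `f_q - f_p` with `f_a y = (1 - e^{-a y}) y^{-3/2}`. More generally, for
`0 < s < 1` integrate `(1 - e^{-a y}) y^{-s-1}` by parts against `y^{-s}`: the boundary term
`y^{-s} (1 - e^{-a y})` vanishes at both ends because `0 ≤ 1 - e^{-a y} ≤ min 1 (a y)`, and what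
remains is `(a / s) ∫ y^{-s} e^{-a y} dy = a^s Γ(1 - s) / s`. At `s = 1/2` this is `2 √π √a`.
-/

open MeasureTheory Real Set Filter Topology

section

variable {a s y : ℝ}

lemma one_sub_exp_neg_mul_nonneg (ha : 0 ≤ a) (hy : 0 ≤ y) : 0 ≤ 1 - exp (-a * y) :=
  sub_nonneg.2 (exp_le_one_iff.2 (by nlinarith))

lemma one_sub_exp_neg_mul_le_one : 1 - exp (-a * y) ≤ 1 :=
  sub_le_self _ (exp_pos _).le

lemma one_sub_exp_neg_mul_le_mul : 1 - exp (-a * y) ≤ a * y := by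
  rw [neg_mul]; linarith [one_sub_le_exp_neg (a * y)]

lemma integrableOn_one_sub_exp_neg_mul_mul_rpow (ha : 0 ≤ a) (hs₀ : 0 < s) (hs₁ : s < 1) :
    IntegrableOn (fun y => (1 - exp (-a * y)) * y ^ (-s - 1)) (Ioi 0) := by
  have hmeas : AEStronglyMeasurable (fun y : ℝ => (1 - exp (-a * y)) * y ^ (-s - 1)) :=
    by fun_prop
  have hnorm : ∀ y > 0, ‖(1 - exp (-a * y)) * y ^ (-s - 1)‖ = (1 - exp (-a * y)) * y ^ (-s - 1) :=
    fun y hy => norm_of_nonneg (mul_nonneg (one_sub_exp_neg_mul_nonneg ha hy.le) (by positivity))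
  rw [← Ioc_union_Ioi_eq_Ioi zero_le_one]
  refine IntegrableOn.union ?_ ?_
  · have hdom : IntegrableOn (fun y : ℝ => a * y ^ (-s)) (Ioc 0 1) := by
      have := intervalIntegral.intervalIntegrable_rpow' (a := 0) (b := 1) (by linarith : -1 < -s)
      rw [intervalIntegrable_iff_integrableOn_Ioc_of_le zero_le_one] at this
      exact this.const_mul a
    refine hdom.mono' hmeas.restrict (ae_restrict_of_forall_mem measurableSet_Ioc fun y hy => ?_)
    rw [hnorm y hy.1]
    calc (1 - exp (-a * y)) * y ^ (-s - 1) ≤ a * y * y ^ (-s - 1) :=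
          mul_le_mul_of_nonneg_right one_sub_exp_neg_mul_le_mul (rpow_nonneg hy.1.le _)
      _ = a * y ^ (-s) := by rw [rpow_sub_one hy.1.ne']; field_simp [hy.1.ne']
  · refine (integrableOn_Ioi_rpow_of_lt (by linarith : -s - 1 < -1) one_pos).mono' hmeas.restrict
      (ae_restrict_of_forall_mem measurableSet_Ioi fun y hy => ?_)
    have hy₀ : 0 < y := zero_lt_one.trans hy
    rw [hnorm y hy₀]
    exact mul_le_of_le_one_left (by positivity) one_sub_exp_neg_mul_le_one

lemma integrableOn_rpow_neg_mul_exp_neg_mul (ha : 0 < a) (hs : s < 1) :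
    IntegrableOn (fun y => y ^ (-s) * exp (-a * y)) (Ioi 0) := by
  refine (integrableOn_rpow_mul_exp_neg_mul_rpow (by linarith : -1 < -s) one_pos ha).congr_fun
    (fun y _ => ?_) measurableSet_Ioi
  simp only [rpow_one]

lemma integral_rpow_neg_mul_exp_neg_mul (ha : 0 < a) (hs : s < 1) :
    ∫ y in Ioi 0, y ^ (-s) * exp (-a * y) = a ^ (s - 1) * Gamma (1 - s) := by
  have h := integral_rpow_mul_exp_neg_mul_Ioi (by linarith : 0 < 1 - s) ha
  rw [sub_sub_cancel_left, one_div, inv_rpow ha.le, ← rpow_neg ha.le, neg_sub] at h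
  simpa only [neg_mul] using h

lemma hasDerivAt_rpow_neg_mul_one_sub_exp_neg_mul (hy : y ≠ 0) :
    HasDerivAt (fun y => y ^ (-s) * (1 - exp (-a * y)))
      (-s * ((1 - exp (-a * y)) * y ^ (-s - 1)) + a * (y ^ (-s) * exp (-a * y))) y := by
  have hpow : HasDerivAt (fun y => y ^ (-s)) (-s * y ^ (-s - 1)) y :=
    hasDerivAt_rpow_const (Or.inl hy)
  have hexp : HasDerivAt (fun y => 1 - exp (-a * y)) (a * exp (-a * y)) y :=
    (((hasDerivAt_id' y).const_mul (-a)).exp.const_sub 1).congr_deriv (by ring)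
  exact (hpow.mul hexp).congr_deriv (by ring)

lemma tendsto_rpow_neg_mul_one_sub_exp_neg_mul_atTop (ha : 0 ≤ a) (hs : 0 < s) :
    Tendsto (fun y => y ^ (-s) * (1 - exp (-a * y))) atTop (𝓝 0) := by
  refine squeeze_zero' ?_ ?_ (tendsto_rpow_neg_atTop hs)
  · filter_upwards [eventually_ge_atTop 0] with y hy
    exact mul_nonneg (rpow_nonneg hy _) (one_sub_exp_neg_mul_nonneg ha hy)
  · filter_upwards [eventually_ge_atTop 0] with y hy
    exact mul_le_of_le_one_right (rpow_nonneg hy _) one_sub_exp_neg_mul_le_one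

lemma continuousWithinAt_rpow_neg_mul_one_sub_exp_neg_mul (ha : 0 ≤ a) (hs₀ : 0 < s)
    (hs₁ : s < 1) :
    ContinuousWithinAt (fun y => y ^ (-s) * (1 - exp (-a * y))) (Ici 0) 0 := by
  rw [← continuousWithinAt_Ioi_iff_Ici, ContinuousWithinAt, zero_rpow (neg_ne_zero.2 hs₀.ne'),
    zero_mul]
  have hbound : Tendsto (fun y : ℝ => a * y ^ (-s + 1)) (𝓝[>] 0) (𝓝 0) := by
    have := ((continuous_rpow_const (by linarith : 0 ≤ -s + 1)).const_mul a).tendsto 0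
    rw [zero_rpow (by linarith), mul_zero] at this
    exact this.mono_left nhdsWithin_le_nhds
  refine squeeze_zero' ?_ ?_ hbound
  · filter_upwards [self_mem_nhdsWithin] with y (hy : 0 < y)
    exact mul_nonneg (rpow_nonneg hy.le _) (one_sub_exp_neg_mul_nonneg ha hy.le)
  · filter_upwards [self_mem_nhdsWithin] with y (hy : 0 < y)
    calc y ^ (-s) * (1 - exp (-a * y)) ≤ y ^ (-s) * (a * y) :=
          mul_le_mul_of_nonneg_left one_sub_exp_neg_mul_le_mul (rpow_nonneg hy.le _)
      _ = a * y ^ (-s + 1) := by rw [rpow_add_one hy.ne']; ring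

theorem integral_one_sub_exp_neg_mul_mul_rpow (ha : 0 ≤ a) (hs₀ : 0 < s) (hs₁ : s < 1) :
    ∫ y in Ioi 0, (1 - exp (-a * y)) * y ^ (-s - 1) = a ^ s * Gamma (1 - s) / s := by
  rcases ha.eq_or_lt with rfl | ha
  · simp [zero_rpow hs₀.ne']
  have hf := integrableOn_one_sub_exp_neg_mul_mul_rpow ha.le hs₀ hs₁
  have hg := integrableOn_rpow_neg_mul_exp_neg_mul ha hs₁
  have hftc := integral_Ioi_of_hasDerivAt_of_tendsto
    (continuousWithinAt_rpow_neg_mul_one_sub_exp_neg_mul ha.le hs₀ hs₁)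
    (fun _ hy => hasDerivAt_rpow_neg_mul_one_sub_exp_neg_mul (ne_of_gt hy))
    ((hf.const_mul (-s)).add (hg.const_mul a))
    (tendsto_rpow_neg_mul_one_sub_exp_neg_mul_atTop ha.le hs₀)
  rw [integral_add (hf.const_mul _) (hg.const_mul _), integral_const_mul, integral_const_mul,
    integral_rpow_neg_mul_exp_neg_mul ha hs₁, zero_rpow (neg_ne_zero.2 hs₀.ne'), zero_mul,
    sub_zero] at hftc
  have ha_pow : a * a ^ (s - 1) = a ^ s := by rw [rpow_sub_one ha.ne']; field_simp
  rw [eq_div_iff hs₀.ne', ← ha_pow]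
  linear_combination -hftc

end

/-- For all real `p ≥ 0` and `q ≥ 0`, the improper integral
`∫₀^∞ (exp(−p·y) − exp(−q·y))·y^(−3/2) dy` converges and equals `2·√π·(√q − √p)`. -/
theorem laplace_integral_corrected (p q : ℝ) (hp : 0 ≤ p) (hq : 0 ≤ q) :
    IntegrableOn
      (fun y : ℝ => (Real.exp (-p * y) - Real.exp (-q * y)) * y ^ (-(3 : ℝ) / 2))
      (Ioi (0 : ℝ)) ∧
    ∫ y in Ioi (0 : ℝ), (Real.exp (-p * y) - Real.exp (-q * y)) * y ^ (-(3 : ℝ) / 2)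
      = 2 * Real.sqrt Real.pi * (Real.sqrt q - Real.sqrt p) := by
  have hsplit : (fun y : ℝ => (exp (-p * y) - exp (-q * y)) * y ^ (-(3 : ℝ) / 2)) =
      fun y => (1 - exp (-q * y)) * y ^ (-(1 / 2) - 1 : ℝ) -
        (1 - exp (-p * y)) * y ^ (-(1 / 2) - 1 : ℝ) := by
    ext y
    rw [show (-(3 : ℝ) / 2) = -(1 / 2) - 1 by norm_num]
    ring
  have hint {a : ℝ} (ha : 0 ≤ a) :=
    integrableOn_one_sub_exp_neg_mul_mul_rpow ha (by norm_num : (0 : ℝ) < 1 / 2) (by norm_num)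
  have hval {a : ℝ} (ha : 0 ≤ a) :=
    integral_one_sub_exp_neg_mul_mul_rpow ha (by norm_num : (0 : ℝ) < 1 / 2) (by norm_num)
  rw [hsplit]
  refine ⟨(hint hq).sub (hint hp), ?_⟩
  rw [integral_sub (hint hq) (hint hp), hval hq, hval hp, ← sqrt_eq_rpow, ← sqrt_eq_rpow,
    show (1 : ℝ) - 1 / 2 = 1 / 2 by norm_num, Gamma_one_half_eq]
  ring
end

section
/- For all real numbers α > 0 and Q ≥ 0, the improper integral ∫₀^∞ 2·sinh(2π·α·y)·y^(−3/2)·exp(−(4π·Q + 2π·α)·y) dy converges and equals 4π·(√(Q + α) − √Q). -/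
/-!
Since `2 sinh (x/2) = e^{x/2} - e^{-x/2}`, the integrand is `(e^{-ay} - e^{-by}) y^{-3/2}`
with `a = 4πQ` and `b = 4π(Q + α)`. For `0 < s < 1`, the function `y^{-s} (e^{-ay} - e^{-by})`
vanishes at `0` and at `∞`, so its derivative integrates to zero over `(0, ∞)`. This expresses
`∫ (e^{-ay} - e^{-by}) y^{-s-1} dy` through the Gamma integrals
`∫ c y^{-s} e^{-cy} dy = Γ(1-s) c^s` and gives `Γ(1-s) (b^s - a^s) / s`, which at `s = 1/2` is
`2√π (√b - √a)`.
-/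

open MeasureTheory Real Set Filter Topology

section GammaIntegral

variable {s c : ℝ}

lemma integrableOn_mul_rpow_neg_mul_exp_neg_mul (hs : s < 1) (hc : 0 ≤ c) :
    IntegrableOn (fun y : ℝ => c * (y ^ (-s) * exp (-(c * y)))) (Ioi 0) := by
  rcases hc.eq_or_lt with rfl | hc
  · simp
  · have h := integrableOn_rpow_mul_exp_neg_mul_rpow (p := 1) (s := -s) (by linarith) one_pos hc
    simp only [rpow_one, neg_mul] at h
    exact h.const_mul c

lemma integral_mul_rpow_neg_mul_exp_neg_mul (hs₀ : 0 < s) (hs : s < 1) (hc : 0 ≤ c) :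
    ∫ y in Ioi 0, c * (y ^ (-s) * exp (-(c * y))) = Gamma (1 - s) * c ^ s := by
  rcases hc.eq_or_lt with rfl | hc
  · simp [zero_rpow hs₀.ne']
  · rw [integral_const_mul, show -s = 1 - s - 1 by ring,
      integral_rpow_mul_exp_neg_mul_Ioi (by linarith) hc, one_div, inv_rpow hc.le,
      ← rpow_neg hc.le, ← mul_assoc, mul_comm, ← rpow_one_add' hc.le (by linarith)]
    ring_nf

end GammaIntegral

section ExpDifference

variable {a b y : ℝ}

lemma exp_neg_mul_sub_exp_neg_mul_nonneg (hab : a ≤ b) (hy : 0 ≤ y) :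
    0 ≤ exp (-(a * y)) - exp (-(b * y)) := by
  rw [sub_nonneg, exp_le_exp]
  nlinarith

lemma exp_neg_mul_sub_exp_neg_mul_le_one (ha : 0 ≤ a) (hy : 0 ≤ y) :
    exp (-(a * y)) - exp (-(b * y)) ≤ 1 := by
  have : exp (-(a * y)) ≤ 1 := exp_le_one_iff.2 (by nlinarith)
  linarith [exp_pos (-(b * y))]

lemma exp_neg_mul_sub_exp_neg_mul_le_mul (ha : 0 ≤ a) (hab : a ≤ b) (hy : 0 ≤ y) :
    exp (-(a * y)) - exp (-(b * y)) ≤ (b - a) * y := by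
  have hfactor :
      exp (-(a * y)) - exp (-(b * y)) = exp (-(a * y)) * (1 - exp (-((b - a) * y))) := by
    rw [mul_sub, mul_one, ← exp_add]; ring_nf
  have h₁ : exp (-(a * y)) ≤ 1 := exp_le_one_iff.2 (by nlinarith)
  have h₂ : 1 - exp (-((b - a) * y)) ≤ (b - a) * y := by
    linarith [add_one_le_exp (-((b - a) * y))]
  have h₃ : 0 ≤ 1 - exp (-((b - a) * y)) := sub_nonneg.2 (exp_le_one_iff.2 (by nlinarith))
  rw [hfactor]
  nlinarith

end ExpDifference

section FrullaniType

variable {a b s : ℝ}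

lemma integrableOn_exp_neg_mul_sub_exp_neg_mul_mul_rpow (hs₀ : 0 < s) (hs : s < 1)
    (ha : 0 ≤ a) (hab : a ≤ b) :
    IntegrableOn (fun y : ℝ => (exp (-(a * y)) - exp (-(b * y))) * y ^ (-s - 1)) (Ioi 0) := by
  have hcont : ContinuousOn (fun y : ℝ => (exp (-(a * y)) - exp (-(b * y))) * y ^ (-s - 1))
      (Ioi 0) :=
    (by fun_prop : Continuous fun y : ℝ => exp (-(a * y)) - exp (-(b * y))).continuousOn.mul
      (continuousOn_id.rpow_const fun y hy => Or.inl (ne_of_gt hy))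
  have hnonneg : ∀ y : ℝ, 0 < y → 0 ≤ (exp (-(a * y)) - exp (-(b * y))) * y ^ (-s - 1) :=
    fun y hy => mul_nonneg (exp_neg_mul_sub_exp_neg_mul_nonneg hab hy.le) (rpow_nonneg hy.le _)
  rw [← Ioc_union_Ioi_eq_Ioi zero_le_one]
  refine IntegrableOn.union ?_ ?_
  · have hdom : IntegrableOn (fun y : ℝ => (b - a) * y ^ (-s)) (Ioc 0 1) :=
      ((intervalIntegrable_iff_integrableOn_Ioc_of_le zero_le_one).1
        (intervalIntegral.intervalIntegrable_rpow' (by linarith))).const_mul _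
    refine hdom.mono' ((hcont.mono Ioc_subset_Ioi_self).aestronglyMeasurable measurableSet_Ioc)
      ((ae_restrict_iff' measurableSet_Ioc).2 (ae_of_all _ fun y hy => ?_))
    rw [norm_of_nonneg (hnonneg y hy.1)]
    calc (exp (-(a * y)) - exp (-(b * y))) * y ^ (-s - 1) ≤ (b - a) * y * y ^ (-s - 1) :=
          mul_le_mul_of_nonneg_right (exp_neg_mul_sub_exp_neg_mul_le_mul ha hab hy.1.le)
            (rpow_nonneg hy.1.le _)
      _ = (b - a) * y ^ (-s) := by
          have := hy.1.ne'
          rw [rpow_sub_one this]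
          field_simp
  · refine (integrableOn_Ioi_rpow_of_lt (a := -s - 1) (by linarith) one_pos).mono'
      ((hcont.mono (Ioi_subset_Ioi zero_le_one)).aestronglyMeasurable measurableSet_Ioi)
      ((ae_restrict_iff' measurableSet_Ioi).2 (ae_of_all _ fun y (hy : 1 < y) => ?_))
    rw [norm_of_nonneg (hnonneg y (by linarith))]
    calc (exp (-(a * y)) - exp (-(b * y))) * y ^ (-s - 1) ≤ 1 * y ^ (-s - 1) :=
          mul_le_mul_of_nonneg_right (exp_neg_mul_sub_exp_neg_mul_le_one ha (by linarith))
            (rpow_nonneg (by linarith) _)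
      _ = y ^ (-s - 1) := one_mul _

lemma hasDerivAt_rpow_neg_mul_exp_neg_mul_sub {y : ℝ} (hy : 0 < y) :
    HasDerivAt (fun y : ℝ => y ^ (-s) * (exp (-(a * y)) - exp (-(b * y))))
      (-s * ((exp (-(a * y)) - exp (-(b * y))) * y ^ (-s - 1)) +
        (b * (y ^ (-s) * exp (-(b * y))) - a * (y ^ (-s) * exp (-(a * y))))) y := by
  have hexp (c : ℝ) : HasDerivAt (fun y : ℝ => exp (-(c * y))) (-c * exp (-(c * y))) y := by
    simpa [mul_comm] using ((hasDerivAt_id y).const_mul c).neg.exp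
  refine ((hasDerivAt_rpow_const (Or.inl hy.ne')).fun_mul
    ((hexp a).fun_sub (hexp b))).congr_deriv ?_
  ring

lemma continuousWithinAt_rpow_neg_mul_exp_neg_mul_sub_zero (hs : s < 1) (ha : 0 ≤ a)
    (hab : a ≤ b) :
    ContinuousWithinAt (fun y : ℝ => y ^ (-s) * (exp (-(a * y)) - exp (-(b * y)))) (Ici 0) 0 := by
  rw [← continuousWithinAt_Ioi_iff_Ici, ContinuousWithinAt]
  simp only [mul_zero, neg_zero, sub_self]
  have hbound : Tendsto (fun y : ℝ => (b - a) * y ^ (1 - s)) (𝓝[>] 0) (𝓝 0) := by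
    have := ((continuousAt_rpow_const 0 (1 - s) (Or.inr (by linarith))).tendsto.const_mul
      (b - a)).mono_left (nhdsWithin_le_nhds (s := Ioi 0))
    simpa [zero_rpow (by linarith : 1 - s ≠ 0)] using this
  refine squeeze_zero_norm' ?_ hbound
  filter_upwards [self_mem_nhdsWithin] with y (hy : 0 < y)
  rw [norm_of_nonneg (mul_nonneg (rpow_nonneg hy.le _)
    (exp_neg_mul_sub_exp_neg_mul_nonneg hab hy.le))]
  calc y ^ (-s) * (exp (-(a * y)) - exp (-(b * y))) ≤ y ^ (-s) * ((b - a) * y) :=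
        mul_le_mul_of_nonneg_left (exp_neg_mul_sub_exp_neg_mul_le_mul ha hab hy.le)
          (rpow_nonneg hy.le _)
    _ = (b - a) * y ^ (1 - s) := by
        rw [sub_eq_add_neg 1 s, rpow_add hy, rpow_one]
        ring

lemma tendsto_rpow_neg_mul_exp_neg_mul_sub_atTop (hs₀ : 0 < s) (ha : 0 ≤ a) (hab : a ≤ b) :
    Tendsto (fun y : ℝ => y ^ (-s) * (exp (-(a * y)) - exp (-(b * y)))) atTop (𝓝 0) := by
  refine squeeze_zero_norm' ?_ (tendsto_rpow_neg_atTop hs₀)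
  filter_upwards [eventually_gt_atTop 0] with y hy
  rw [norm_of_nonneg (mul_nonneg (rpow_nonneg hy.le _)
    (exp_neg_mul_sub_exp_neg_mul_nonneg hab hy.le))]
  exact mul_le_of_le_one_right (rpow_nonneg hy.le _) (exp_neg_mul_sub_exp_neg_mul_le_one ha hy.le)

lemma integral_exp_neg_mul_sub_exp_neg_mul_mul_rpow (hs₀ : 0 < s) (hs : s < 1)
    (ha : 0 ≤ a) (hab : a ≤ b) :
    ∫ y in Ioi 0, (exp (-(a * y)) - exp (-(b * y))) * y ^ (-s - 1) =
      Gamma (1 - s) / s * (b ^ s - a ^ s) := by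
  have hg := integrableOn_exp_neg_mul_sub_exp_neg_mul_mul_rpow hs₀ hs ha hab
  have hka := integrableOn_mul_rpow_neg_mul_exp_neg_mul hs ha
  have hkb := integrableOn_mul_rpow_neg_mul_exp_neg_mul hs (ha.trans hab)
  have hk : IntegrableOn (fun y : ℝ =>
      b * (y ^ (-s) * exp (-(b * y))) - a * (y ^ (-s) * exp (-(a * y)))) (Ioi 0) :=
    hkb.sub hka
  have hFTC := integral_Ioi_of_hasDerivAt_of_tendsto
    (continuousWithinAt_rpow_neg_mul_exp_neg_mul_sub_zero hs ha hab)
    (fun y hy => hasDerivAt_rpow_neg_mul_exp_neg_mul_sub hy) ((hg.const_mul (-s)).add hk)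
    (tendsto_rpow_neg_mul_exp_neg_mul_sub_atTop hs₀ ha hab)
  rw [integral_add (hg.const_mul _) hk, integral_sub hkb hka, integral_const_mul,
    integral_mul_rpow_neg_mul_exp_neg_mul hs₀ hs ha,
    integral_mul_rpow_neg_mul_exp_neg_mul hs₀ hs (ha.trans hab)] at hFTC
  simp only [mul_zero, neg_zero, sub_self] at hFTC
  rw [div_mul_eq_mul_div, eq_div_iff hs₀.ne']
  linear_combination -hFTC

end FrullaniType

lemma two_mul_sinh_mul_mul_exp_neg_add_mul (c d y : ℝ) :
    2 * sinh (c * y) * exp (-(d + c) * y) = exp (-(d * y)) - exp (-((d + 2 * c) * y)) := by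
  rw [sinh_eq, mul_div_cancel₀ _ two_ne_zero, sub_mul, ← exp_add, ← exp_add]
  ring_nf

/-- For all real `α > 0` and `Q ≥ 0`, the improper integral
`∫₀^∞ 2·sinh(2π·α·y)·y^(−3/2)·exp(−(4π·Q + 2π·α)·y) dy` converges and equals
`4π·(√(Q + α) − √Q)`. -/
theorem whittaker_integral_eval (α Q : ℝ) (hα : 0 < α) (hQ : 0 ≤ Q) :
    IntegrableOn
      (fun y : ℝ => 2 * Real.sinh (2 * Real.pi * α * y) * y ^ (-(3 : ℝ) / 2) *
        Real.exp (-(4 * Real.pi * Q + 2 * Real.pi * α) * y))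
      (Ioi (0 : ℝ)) ∧
    ∫ y in Ioi (0 : ℝ), 2 * Real.sinh (2 * Real.pi * α * y) * y ^ (-(3 : ℝ) / 2) *
        Real.exp (-(4 * Real.pi * Q + 2 * Real.pi * α) * y)
      = 4 * Real.pi * (Real.sqrt (Q + α) - Real.sqrt Q) := by
  have hintegrand (y : ℝ) : 2 * sinh (2 * π * α * y) * y ^ (-(3 : ℝ) / 2) *
      exp (-(4 * π * Q + 2 * π * α) * y) =
      (exp (-(4 * π * Q * y)) - exp (-(4 * π * (Q + α) * y))) * y ^ (-(1 / 2 : ℝ) - 1) := by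
    rw [mul_right_comm, two_mul_sinh_mul_mul_exp_neg_add_mul,
      show 4 * π * Q + 2 * (2 * π * α) = 4 * π * (Q + α) by ring,
      show -(1 / 2 : ℝ) - 1 = -3 / 2 by norm_num]
  have hQα : 4 * π * Q ≤ 4 * π * (Q + α) := by nlinarith [pi_pos]
  have hsqrt (x : ℝ) : (4 * π * x) ^ (1 / 2 : ℝ) = 2 * √π * √x := by
    rw [← sqrt_eq_rpow, sqrt_mul (by positivity), sqrt_mul (by norm_num),
      show (4 : ℝ) = 2 ^ 2 by norm_num, sqrt_sq zero_le_two]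
  have hπQ : 0 ≤ 4 * π * Q := by positivity
  simp only [hintegrand]
  refine ⟨integrableOn_exp_neg_mul_sub_exp_neg_mul_mul_rpow one_half_pos one_half_lt_one hπQ hQα,
    ?_⟩
  rw [integral_exp_neg_mul_sub_exp_neg_mul_mul_rpow one_half_pos one_half_lt_one hπQ hQα,
    hsqrt, hsqrt, show (1 : ℝ) - 1 / 2 = 1 / 2 by norm_num, Gamma_one_half_eq]
  linear_combination (4 * (√(Q + α) - √Q)) * mul_self_sqrt pi_pos.le
end

section
/- Let n be a positive integer and let a, b be natural numbers with a < b such that a = 0 or a divides n, b divides n, and no divisor t of n satisfies a < t < b. Let S_n = {(y₁,y₂) ∈ ℝ² : y₁ > 0, y₂ > 0, and t²·y₂ ≠ n·y₁ for every positive divisor t of n}. Then the set W(a,b) = {(y₁,y₂) ∈ ℝ² : y₂ > 0 and a²·y₂ < n·y₁ < b²·y₂} is a connected component of S_n. -/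
/-- The complement of the Heegner lines of index `−n` in the positive quadrant. -/
def heegnerComplement (n : ℕ) : Set (ℝ × ℝ) :=
  {y | 0 < y.1 ∧ 0 < y.2 ∧
    ∀ t : ℕ, 0 < t → t ∣ n → (t : ℝ) ^ 2 * y.2 ≠ (n : ℝ) * y.1}

/-- The Weyl chamber `W(a,b)`. -/
def weylChamber (n a b : ℕ) : Set (ℝ × ℝ) :=
  {y | 0 < y.2 ∧ (a : ℝ) ^ 2 * y.2 < (n : ℝ) * y.1 ∧ (n : ℝ) * y.1 < (b : ℝ) ^ 2 * y.2}

lemma weylChamber_convex (n a b : ℕ) : Convex ℝ (weylChamber n a b) := by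
  rintro p ⟨hp2, hp3, hp4⟩ q ⟨hq2, hq3, hq4⟩ u v hu hv huv
  simp only [weylChamber, Set.mem_setOf_eq, Prod.fst_add, Prod.snd_add, Prod.smul_fst,
    Prod.smul_snd, smul_eq_mul] at *
  rcases eq_or_lt_of_le hu with rfl | hu'
  · have hv1 : v = 1 := by linarith
    subst hv1; simpa using ⟨hq2, hq3, hq4⟩
  · refine ⟨?_, ?_, ?_⟩
    · nlinarith [mul_pos hu' hp2, mul_nonneg hv hq2.le]
    · nlinarith [mul_lt_mul_of_pos_left hp3 hu', mul_le_mul_of_nonneg_left hq3.le hv]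
    · nlinarith [mul_lt_mul_of_pos_left hp4 hu', mul_le_mul_of_nonneg_left hq4.le hv]

lemma weylChamber_isOpen (n a b : ℕ) : IsOpen (weylChamber n a b) := by
  have : weylChamber n a b =
      {y : ℝ × ℝ | 0 < y.2} ∩ ({y | (a : ℝ) ^ 2 * y.2 < (n : ℝ) * y.1} ∩
        {y | (n : ℝ) * y.1 < (b : ℝ) ^ 2 * y.2}) := by
    ext y; simp [weylChamber, and_assoc]
  rw [this]
  exact (isOpen_lt continuous_const continuous_snd).inter
    ((isOpen_lt (continuous_const.mul continuous_snd) (continuous_const.mul continuous_fst)).inter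
     (isOpen_lt (continuous_const.mul continuous_fst) (continuous_const.mul continuous_snd)))

/-- If `a < b`, `a = 0` or `a ∣ n`, `b ∣ n`, and no divisor of `n` lies strictly between
`a` and `b`, then `W(a,b)` is a connected component of the complement `S_n` of the Heegner
lines in the positive quadrant. -/
theorem weylChamber_is_connectedComponent (n : ℕ) (hn : 0 < n) (a b : ℕ) (hab : a < b)
    (ha : a = 0 ∨ a ∣ n) (hb : b ∣ n)
    (hgap : ∀ t : ℕ, t ∣ n → ¬(a < t ∧ t < b)) :
    (weylChamber n a b).Nonempty ∧
      ∀ y ∈ weylChamber n a b,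
        connectedComponentIn (heegnerComplement n) y = weylChamber n a b := by
  have hnR : (0 : ℝ) < n := by exact_mod_cast hn
  have habR : (a : ℝ) ^ 2 < (b : ℝ) ^ 2 := by
    have : (a : ℝ) < b := by exact_mod_cast hab
    nlinarith [Nat.cast_nonneg (α := ℝ) a]
  have hbpos : 0 < b := Nat.pos_of_dvd_of_pos hb hn
  -- W ⊆ S
  have hWS : weylChamber n a b ⊆ heegnerComplement n := by
    rintro ⟨y1, y2⟩ ⟨hy2, hlo, hhi⟩
    simp only at hy2 hlo hhi
    have hy1 : 0 < y1 := by nlinarith [sq_nonneg (a : ℝ)]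
    refine ⟨hy1, hy2, ?_⟩
    intro t ht htn
    rcases lt_or_ge t b with htb | hbt
    · have hta : t ≤ a := by
        by_contra h
        exact hgap t htn ⟨by omega, htb⟩
      have htaR : (t : ℝ) ≤ a := by exact_mod_cast hta
      have : (t:ℝ)^2 * y2 ≤ (a:ℝ)^2 * y2 :=
        mul_le_mul_of_nonneg_right (pow_le_pow_left₀ (Nat.cast_nonneg t) htaR 2) hy2.le
      simp only; linarith
    · have hbtR : (b : ℝ) ≤ t := by exact_mod_cast hbt
      have : (b:ℝ)^2 * y2 ≤ (t:ℝ)^2 * y2 :=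
        mul_le_mul_of_nonneg_right (pow_le_pow_left₀ (Nat.cast_nonneg b) hbtR 2) hy2.le
      simp only; linarith
  -- nonempty
  have hne : (weylChamber n a b).Nonempty := by
    refine ⟨(((a:ℝ)^2 + (b:ℝ)^2) / (2*n), 1), by norm_num, ?_, ?_⟩ <;>
      simp only <;> rw [mul_div_assoc']
    · rw [lt_div_iff₀ (by positivity)]; nlinarith
    · rw [div_lt_iff₀ (by positivity)]; nlinarith
  refine ⟨hne, ?_⟩
  intro y hy
  apply subset_antisymm
  · set V : Set (ℝ × ℝ) := {z | (n : ℝ) * z.1 < (a:ℝ)^2 * z.2} ∪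
      {z | (b:ℝ)^2 * z.2 < (n:ℝ) * z.1} with hV
    have hVopen : IsOpen V :=
      (isOpen_lt (continuous_const.mul continuous_fst) (continuous_const.mul continuous_snd)).union
      (isOpen_lt (continuous_const.mul continuous_snd) (continuous_const.mul continuous_fst))
    have hdisj : Disjoint (weylChamber n a b) V := by
      rw [Set.disjoint_left]
      rintro z ⟨_, hlo, hhi⟩ (h | h) <;> simp only [Set.mem_setOf_eq] at h <;> linarith
    have hsub : connectedComponentIn (heegnerComplement n) y ⊆ weylChamber n a b ∪ V := by
      intro z hz
      obtain ⟨hz1, hz2, hzne⟩ := connectedComponentIn_subset _ _ hz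
      rcases lt_trichotomy ((n:ℝ) * z.1) ((a:ℝ)^2 * z.2) with h | h | h
      · exact Or.inr (Or.inl h)
      · exfalso
        rcases ha with rfl | ha'
        · push_cast at h; nlinarith [mul_pos hnR hz1]
        · exact hzne a (Nat.pos_of_dvd_of_pos ha' hn) ha' h.symm
      rcases lt_trichotomy ((n:ℝ) * z.1) ((b:ℝ)^2 * z.2) with h' | h' | h'
      · exact Or.inl ⟨hz2, h, h'⟩
      · exact absurd h'.symm (hzne b hbpos hb)
      · exact Or.inr (Or.inr h')
    have hyin : (connectedComponentIn (heegnerComplement n) y ∩ weylChamber n a b).Nonempty :=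
      ⟨y, mem_connectedComponentIn (hWS hy), hy⟩
    exact IsPreconnected.subset_left_of_subset_union (weylChamber_isOpen n a b) hVopen
      hdisj hsub hyin isPreconnected_connectedComponentIn
  · exact ((weylChamber_convex n a b).isPreconnected).subset_connectedComponentIn hy hWS
end

section
/- Let n be a positive integer and let a, b be natural numbers with a < b such that a = 0 or a divides n, b divides n, and no divisor t of n satisfies a < t < b. Let (y₁,y₂) ∈ ℝ² with y₂ > 0 and a²·y₂ < n·y₁ < b²·y₂. Then the sum over the positive divisors t of n of ((t·y₂ + (n/t)·y₁) − |t·y₂ − (n/t)·y₁|) equals 2·( y₁ · Σ_{t ∣ n, t ≥ b} (n/t) + y₂ · Σ_{t ∣ n, 0 < t ≤ a} t ). -/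
open Finset

lemma two_min_eq (x y : ℝ) : x + y - |x - y| = 2 * min x y := by
  rcases le_total x y with h | h
  · rw [min_eq_left h, abs_of_nonpos (by linarith)]; ring
  · rw [min_eq_right h, abs_of_nonneg (by linarith)]; ring

/-- Expansion of the additive theta lift adapted to the Weyl chamber `W(a,b)`:
the divisor sum equals `2·(y₁·Σ_{t∣n, t≥b} n/t + y₂·Σ_{t∣n, 0<t≤a} t)`. -/
theorem theta_lift_on_weylChamber (n : ℕ) (hn : 0 < n) (a b : ℕ) (hab : a < b)
    (ha : a = 0 ∨ a ∣ n) (hb : b ∣ n)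
    (hgap : ∀ t : ℕ, t ∣ n → ¬(a < t ∧ t < b))
    (y₁ y₂ : ℝ) (hy₂ : 0 < y₂)
    (h₁ : (a : ℝ) ^ 2 * y₂ < (n : ℝ) * y₁) (h₂ : (n : ℝ) * y₁ < (b : ℝ) ^ 2 * y₂) :
    ∑ t ∈ n.divisors,
        (((t : ℝ) * y₂ + ((n / t : ℕ) : ℝ) * y₁) - |(t : ℝ) * y₂ - ((n / t : ℕ) : ℝ) * y₁|)
      = 2 * (y₁ * ∑ t ∈ n.divisors.filter (fun t => b ≤ t), ((n / t : ℕ) : ℝ)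
           + y₂ * ∑ t ∈ n.divisors.filter (fun t => 0 < t ∧ t ≤ a), (t : ℝ)) := by
  rw [← Finset.sum_filter_add_sum_filter_not n.divisors (fun t => b ≤ t)]
  have hfeq : n.divisors.filter (fun t => ¬ b ≤ t)
      = n.divisors.filter (fun t => 0 < t ∧ t ≤ a) := by
    ext t
    simp only [Finset.mem_filter, Nat.mem_divisors, not_le]
    constructor
    · rintro ⟨⟨hd, hn0⟩, hlt⟩
      have ht0 : 0 < t := Nat.pos_of_dvd_of_pos hd hn
      have : ¬ (a < t ∧ t < b) := hgap t hd
      exact ⟨⟨hd, hn0⟩, ht0, by omega⟩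
    · rintro ⟨⟨hd, hn0⟩, _, hta⟩
      exact ⟨⟨hd, hn0⟩, by omega⟩
  rw [hfeq]
  have hA : ∑ t ∈ n.divisors.filter (fun t => b ≤ t),
      (((t : ℝ) * y₂ + ((n / t : ℕ) : ℝ) * y₁) - |(t : ℝ) * y₂ - ((n / t : ℕ) : ℝ) * y₁|)
      = 2 * (y₁ * ∑ t ∈ n.divisors.filter (fun t => b ≤ t), ((n / t : ℕ) : ℝ)) := by
    rw [Finset.mul_sum, Finset.mul_sum]
    apply Finset.sum_congr rfl
    intro t ht
    simp only [Finset.mem_filter, Nat.mem_divisors] at ht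
    obtain ⟨⟨hd, _⟩, hbt⟩ := ht
    have ht0 : 0 < t := Nat.pos_of_dvd_of_pos hd hn
    have hnt : (t : ℝ) * ((n / t : ℕ) : ℝ) = (n : ℝ) := by
      rw [← Nat.cast_mul, Nat.mul_div_cancel' hd]
    have htR : (0 : ℝ) < t := by exact_mod_cast ht0
    have hbR : (b : ℝ) ≤ (t : ℝ) := by exact_mod_cast hbt
    have hbnn : (0 : ℝ) ≤ b := Nat.cast_nonneg b
    have hnty : (t : ℝ) * (((n / t : ℕ) : ℝ) * y₁) = (n : ℝ) * y₁ := by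
      rw [← mul_assoc, hnt]
    have hmin : ((n / t : ℕ) : ℝ) * y₁ ≤ (t : ℝ) * y₂ := by
      nlinarith [mul_le_mul hbR hbR hbnn (le_of_lt htR)]
    rw [two_min_eq, min_eq_right hmin]; ring
  have hB : ∑ t ∈ n.divisors.filter (fun t => 0 < t ∧ t ≤ a),
      (((t : ℝ) * y₂ + ((n / t : ℕ) : ℝ) * y₁) - |(t : ℝ) * y₂ - ((n / t : ℕ) : ℝ) * y₁|)
      = 2 * (y₂ * ∑ t ∈ n.divisors.filter (fun t => 0 < t ∧ t ≤ a), (t : ℝ)) := by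
    rw [Finset.mul_sum, Finset.mul_sum]
    apply Finset.sum_congr rfl
    intro t ht
    simp only [Finset.mem_filter, Nat.mem_divisors] at ht
    obtain ⟨⟨hd, _⟩, ht0, hta⟩ := ht
    have hnt : (t : ℝ) * ((n / t : ℕ) : ℝ) = (n : ℝ) := by
      rw [← Nat.cast_mul, Nat.mul_div_cancel' hd]
    have htR : (0 : ℝ) < t := by exact_mod_cast ht0
    have htaR : (t : ℝ) ≤ (a : ℝ) := by exact_mod_cast hta
    have htnn : (0 : ℝ) ≤ t := le_of_lt htR
    have hnty : (t : ℝ) * (((n / t : ℕ) : ℝ) * y₁) = (n : ℝ) * y₁ := by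
      rw [← mul_assoc, hnt]
    have hmin : (t : ℝ) * y₂ ≤ ((n / t : ℕ) : ℝ) * y₁ := by
      nlinarith [mul_le_mul htaR htaR htnn (le_trans htnn htaR)]
    rw [two_min_eq, min_eq_left hmin]; ring
  rw [hA, hB]; ring
end

section
/- Equip ℂ² with the hermitian form ⟨u,v⟩ = q·u₁·conj(v₂) + conj(q)·u₂·conj(v₁), where q is a nonzero complex number, let δ be a purely imaginary complex number with Im δ > 0, set ε = −δ·conj(q), and for τ ∈ ℂ set z(τ) = (−τ·δ·conj(q), 1). Let λ = (λ₁,λ₂) ∈ ℂ² and let m be a real number with ⟨λ,λ⟩ = m < 0. Then: (i) λ₂ ≠ 0; (ii) for τ ∈ ℂ, ⟨z(τ), λ⟩ = 0 if and only if τ = conj(λ₁/(λ₂·ε)); and (iii) Im(conj(λ₁/(λ₂·ε))) = −m/(2·|δ|·|q·λ₂|²), which is positive, so the Heegner point τ_λ = conj(λ₁/(λ₂·ε)) lies in the upper half-plane. -/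
/-!
Since `⟨z(τ), λ⟩ = conj q · (conj λ₁ − τ·δ·q·conj λ₂)` is affine in `τ`, it has the unique zero
`τ_λ = conj λ₁ / (δ·q·conj λ₂)`, which equals `conj (λ₁ / (λ₂·ε))` because `conj δ = −δ`.
Multiplying numerator and denominator by `conj q · λ₂` gives
`τ_λ = conj (q·λ₁·conj λ₂) / (δ·|q·λ₂|²)`, and `2·Re (q·λ₁·conj λ₂) = ⟨λ, λ⟩ = m`; dividing by
the purely imaginary `δ` turns this real part into the imaginary part `−m / (2·|δ|·|q·λ₂|²)`.
-/

open Complex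

/-- The hermitian form `⟨u,v⟩ = q·u₁·conj(v₂) + conj(q)·u₂·conj(v₁)` on `ℂ²`. -/
def hermForm (q : ℂ) (u v : ℂ × ℂ) : ℂ :=
  q * u.1 * (starRingEnd ℂ) v.2 + (starRingEnd ℂ) q * u.2 * (starRingEnd ℂ) v.1

/-- The normalized representative `z(τ) = (−τ·δ·conj(q), 1)`. -/
def zRep (q δ τ : ℂ) : ℂ × ℂ := (-τ * δ * (starRingEnd ℂ) q, 1)

open ComplexConjugate

theorem Complex.conj_eq_neg_of_re_eq_zero {z : ℂ} (hz : z.re = 0) : conj z = -z := by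
  apply Complex.ext <;> simp [hz]

theorem Complex.im_div_of_re_eq_zero (z : ℂ) {w : ℂ} (hw : w.re = 0) :
    (z / w).im = -z.re / w.im := by
  rw [div_im, hw, normSq_apply, hw]
  by_cases hw' : w.im = 0
  · simp [hw']
  · field_simp
    ring

theorem hermForm_self (q : ℂ) (u : ℂ × ℂ) :
    hermForm q u u = (2 * (q * u.1 * conj u.2).re : ℝ) := by
  rw [← add_conj]
  simp only [hermForm, map_mul, conj_conj]
  ring

theorem snd_ne_zero_of_hermForm_self_ne_zero {q : ℂ} {u : ℂ × ℂ} (h : hermForm q u u ≠ 0) :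
    u.2 ≠ 0 := by
  intro hu
  simp [hermForm, hu] at h

theorem hermForm_zRep (q δ τ : ℂ) (v : ℂ × ℂ) :
    hermForm q (zRep q δ τ) v = conj q * (conj v.1 - τ * (δ * q * conj v.2)) := by
  simp only [hermForm, zRep]
  ring

/-- The Heegner point `τ_λ` of `λ = v`, the zero of `τ ↦ ⟨z(τ), v⟩`. -/
noncomputable def heegnerPoint (q δ : ℂ) (v : ℂ × ℂ) : ℂ :=
  conj v.1 / (δ * q * conj v.2)

theorem hermForm_zRep_eq_zero_iff {q δ : ℂ} {v : ℂ × ℂ} (hq : q ≠ 0)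
    (hv : δ * q * conj v.2 ≠ 0) (τ : ℂ) :
    hermForm q (zRep q δ τ) v = 0 ↔ τ = heegnerPoint q δ v := by
  rw [hermForm_zRep, mul_eq_zero, or_iff_right ((map_ne_zero _).2 hq), sub_eq_zero,
    heegnerPoint, eq_div_iff hv, eq_comm]

theorem heegnerPoint_eq_conj_div {q δ ε : ℂ} (hδ : conj δ = -δ) (hε : ε = -δ * conj q)
    (a b : ℂ) : heegnerPoint q δ (a, b) = conj (a / (b * ε)) := by
  rw [heegnerPoint, hε, map_div₀, map_mul, map_mul, map_neg, hδ, conj_conj, neg_neg]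
  ring

theorem heegnerPoint_eq_conj_div_normSq (q δ : ℂ) (v : ℂ × ℂ) :
    heegnerPoint q δ v = conj (q * v.1 * conj v.2) / (δ * normSq (q * v.2)) := by
  by_cases hqv : q * v.2 = 0
  · rcases mul_eq_zero.1 hqv with h | h <;> simp [heegnerPoint, h]
  · have hc : conj q * v.2 ≠ 0 :=
      mul_ne_zero ((map_ne_zero _).2 (left_ne_zero_of_mul hqv)) (right_ne_zero_of_mul hqv)
    rw [heegnerPoint, ← mul_div_mul_right _ _ hc, normSq_eq_conj_mul_self]
    simp only [map_mul, conj_conj]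
    ring

theorem im_heegnerPoint {δ : ℂ} (hδ : δ.re = 0) (q : ℂ) (v : ℂ × ℂ) :
    (heegnerPoint q δ v).im = -(hermForm q v v).re / (2 * δ.im * normSq (q * v.2)) := by
  have hre : (δ * normSq (q * v.2)).re = 0 := by simp [hδ]
  rw [heegnerPoint_eq_conj_div_normSq, im_div_of_re_eq_zero _ hre, hermForm_self, ofReal_re,
    conj_re, im_mul_ofReal]
  ring

/-- For a vector `λ = (λ₁,λ₂)` of negative norm `m`: (i) `λ₂ ≠ 0`; (ii) `⟨z(τ),λ⟩ = 0` iff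
`τ = conj(λ₁/(λ₂·ε))` where `ε = −δ·conj(q)`; (iii) the Heegner point
`τ_λ = conj(λ₁/(λ₂·ε))` has imaginary part `−m/(2·|δ|·|q·λ₂|²) > 0`, so it lies in the
upper half-plane. -/
theorem heegner_point (q δ ε : ℂ) (hq : q ≠ 0) (hδre : δ.re = 0) (hδim : 0 < δ.im)
    (hε : ε = -δ * (starRingEnd ℂ) q) (lam₁ lam₂ : ℂ) (m : ℝ)
    (hnorm : hermForm q (lam₁, lam₂) (lam₁, lam₂) = (m : ℂ)) (hm : m < 0) :
    lam₂ ≠ 0 ∧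
    (∀ τ : ℂ, hermForm q (zRep q δ τ) (lam₁, lam₂) = 0 ↔
      τ = (starRingEnd ℂ) (lam₁ / (lam₂ * ε))) ∧
    ((starRingEnd ℂ) (lam₁ / (lam₂ * ε))).im
        = -m / (2 * ‖δ‖ * ‖q * lam₂‖ ^ 2) ∧
    0 < ((starRingEnd ℂ) (lam₁ / (lam₂ * ε))).im := by
  have hlam₂ : lam₂ ≠ 0 :=
    snd_ne_zero_of_hermForm_self_ne_zero (by rw [hnorm]; exact_mod_cast hm.ne)
  have hδ : δ ≠ 0 := fun h => hδim.ne' (by simp [h])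
  have hnormδ : ‖δ‖ = δ.im := by rw [← abs_im_eq_norm.2 hδre, abs_of_pos hδim]
  have him : (heegnerPoint q δ (lam₁, lam₂)).im = -m / (2 * ‖δ‖ * ‖q * lam₂‖ ^ 2) := by
    rw [im_heegnerPoint hδre, hnorm, ofReal_re, hnormδ, Complex.sq_norm]
  rw [← heegnerPoint_eq_conj_div (conj_eq_neg_of_re_eq_zero hδre) hε]
  refine ⟨hlam₂, hermForm_zRep_eq_zero_iff hq ?_, him, ?_⟩
  · simp [hδ, hq, hlam₂]
  · rw [him]
    have hqlam₂ : 0 < ‖q * lam₂‖ := norm_pos_iff.2 (mul_ne_zero hq hlam₂)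
    have hδpos : 0 < ‖δ‖ := norm_pos_iff.2 hδ
    exact div_pos (neg_pos.2 hm) (by positivity)
end
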